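/- arXiv:1802.07829 — 3 statements merged into one kernel-verified Lean document; each statement's English description precedes it below -/
import Mathlib

section
/- Fix i ∈ ℤ. For every A ⊆ ℤ with i ∈ A and every F ⊆ ℤ, one has π_i(A) ∩ F ≠ ∅ if and only if A ∩ π_i*(F) ≠ ∅. (In words: on configurations in which site i is occupied, the spiking map π_i and the map π_i* are dual to each other.) -/
/-- The dual spiking map applied to a singleton `{k}`:
`π_i*({i}) = ∅`, `π_i*({k}) = {i, k}` for `k ∈ {i-1, i+1}`, `π_i*({k}) = {k}` otherwise. -/
def piStarSingle (i k : ℤ) : Set ℤ :=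
  if k = i then ∅ else if k = i - 1 ∨ k = i + 1 then {i, k} else {k}

/-- The dual spiking map `π_i*(F) = ⋃_{k ∈ F} π_i*({k})`. -/
def piStar (i : ℤ) (F : Set ℤ) : Set ℤ := ⋃ k ∈ F, piStarSingle i k

/-- The spiking map `π_i(A) = (A ∪ {i-1, i+1}) \ {i}`. -/
def piSpike (i : ℤ) (A : Set ℤ) : Set ℤ := (A ∪ {i - 1, i + 1}) \ {i}

/-- On configurations `A` with `i ∈ A`, the spiking map `π_i`
and the map `π_i*` are dual to each other. -/
theorem piSpike_piStar_dual (i : ℤ) :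
    ∀ A F : Set ℤ, i ∈ A →
      ((piSpike i A ∩ F).Nonempty ↔ (A ∩ piStar i F).Nonempty) := by

  intro A F hiA
  constructor
  · rintro ⟨x, hx, hxF⟩
    obtain ⟨hxA, hxi⟩ := hx
    simp only [Set.mem_singleton_iff] at hxi
    by_cases hx1 : x = i - 1 ∨ x = i + 1
    · exact ⟨i, hiA, Set.mem_biUnion hxF (by simp [piStarSingle, hxi, hx1])⟩
    · have hxA' : x ∈ A := by
        rcases hxA with h | h
        · exact h
        · exact absurd (by simpa using h) hx1
      exact ⟨x, hxA', Set.mem_biUnion hxF (by simp [piStarSingle, hxi, hx1])⟩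
  · rintro ⟨a, haA, ha⟩
    simp only [piStar, Set.mem_iUnion] at ha
    obtain ⟨k, hkF, hk⟩ := ha
    unfold piStarSingle at hk
    split_ifs at hk with h1 h2
    · exact absurd hk (Set.notMem_empty a)
    · refine ⟨k, ⟨Or.inr (by simpa using h2), ?_⟩, hkF⟩
      simp only [Set.mem_singleton_iff]
      rintro rfl; rcases h2 with h | h <;> omega
    · simp only [Set.mem_singleton_iff] at hk
      subst hk
      exact ⟨a, ⟨Or.inl haA, by simpa using h1⟩, hkF⟩
end

section
/- Let l, r ∈ ℤ with l < r and let A = {l, l+1, …, r} be the integer interval from l to r. Then for every j ∈ ℤ: π_j*(A) = {l−1, l, …, r} if j = l−1; π_j*(A) = {l, …, r, r+1} if j = r+1; and π_j*(A) = A for all other j. In particular, applying any dual spiking map to an interval with at least two points again yields an interval containing A, so such intervals stay simply connected and can only grow, the left endpoint decreasing by one exactly under π_{l−1}* and the right endpoint increasing by one exactly under π_{r+1}*. -/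
lemma mem_piStarSingle (i k x : ℤ) :
    x ∈ piStarSingle i k ↔ k ≠ i ∧ (x = k ∨ ((k = i - 1 ∨ k = i + 1) ∧ x = i)) := by
  unfold piStarSingle
  split_ifs with h1 h2 <;> simp_all <;> tauto

/-- For an integer interval `A = {l, …, r}` with `l < r`, applying a
dual spiking map at `j = l-1` yields `{l-1, …, r}`, at `j = r+1` yields
`{l, …, r+1}`, and at any other `j` leaves `A` unchanged. -/
theorem piStar_interval_growth (l r : ℤ) (hlr : l < r) (j : ℤ) :
    piStar j (Set.Icc l r) =
      if j = l - 1 then Set.Icc (l - 1) r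
      else if j = r + 1 then Set.Icc l (r + 1)
      else Set.Icc l r := by
  ext x
  simp only [piStar, Set.mem_iUnion, mem_piStarSingle, Set.mem_Icc, exists_prop]
  split_ifs with h1 h2 <;> simp only [Set.mem_Icc]
  · constructor
    · rintro ⟨k, ⟨hk1, hk2⟩, hne, (rfl | ⟨(rfl | rfl), rfl⟩)⟩ <;> omega
    · intro hx
      by_cases hxl : x = l - 1
      · exact ⟨l, by omega, by omega, Or.inr ⟨by omega, by omega⟩⟩
      · exact ⟨x, by omega, by omega, Or.inl rfl⟩
  · constructor
    · rintro ⟨k, ⟨hk1, hk2⟩, hne, (rfl | ⟨(rfl | rfl), rfl⟩)⟩ <;> omega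
    · intro hx
      by_cases hxr : x = r + 1
      · exact ⟨r, by omega, by omega, Or.inr ⟨by omega, by omega⟩⟩
      · exact ⟨x, by omega, by omega, Or.inl rfl⟩
  · constructor
    · rintro ⟨k, ⟨hk1, hk2⟩, hne, (rfl | ⟨(rfl | rfl), rfl⟩)⟩ <;> omega
    · intro hx
      by_cases hxj : x = j
      · by_cases hxr : x < r
        · exact ⟨x + 1, ⟨by omega, by omega⟩, by omega, Or.inr ⟨by omega, by omega⟩⟩
        · exact ⟨x - 1, ⟨by omega, by omega⟩, by omega, Or.inr ⟨by omega, by omega⟩⟩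
      · exact ⟨x, ⟨by omega, by omega⟩, by omega, Or.inl rfl⟩
end

section
/- Let n ≥ 1 and let D_1, …, D_{2n} be a sequence of triplets from the seven-element set S = {dld, drd, dru, ulu, uru, urd, dlu} ⊆ {d,u} × {l,r} × {d,u}, satisfying the cyclic chaining condition that the last letter of D_k equals the first letter of D_{k+1} for all 1 ≤ k < 2n and the last letter of D_{2n} equals the first letter of D_1. Assume that exactly n of the triplets have middle letter l and exactly n have middle letter r, and that exactly one triplet of the sequence equals dlu. Writing N(x) for the number of indices k with D_k = x, the following hold: (i) N(urd) = N(dru) + 1; (ii) N(dld) + N(ulu) = n − 1; (iii) N(drd) + N(dru) + N(uru) + N(urd) = n; (iv) 2·N(urd) ≤ n + 1, so N(urd) ≤ n/2 + 1. -/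
/- Direction triplets are encoded as elements of `Bool × Bool × Bool`,
with `false = d` (down) and `true = u` (up) for vertical letters, and
`false = l` (left) and `true = r` (right) for the middle horizontal letter. -/

def dld : Bool × Bool × Bool := (false, false, false)
def drd : Bool × Bool × Bool := (false, true, false)
def dru : Bool × Bool × Bool := (false, true, true)
def ulu : Bool × Bool × Bool := (true, false, true)
def uru : Bool × Bool × Bool := (true, true, true)
def urd : Bool × Bool × Bool := (true, true, false)
def dlu : Bool × Bool × Bool := (false, false, true)
def uld : Bool × Bool × Bool := (true, false, false)

/-- `Ncount n D x` is the number of indices `k < 2n` with `D_k = x`. -/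
def Ncount (n : ℕ) (D : ℕ → Bool × Bool × Bool) (x : Bool × Bool × Bool) : ℕ :=
  ((Finset.range (2 * n)).filter fun k => D k = x).card

/-- For a cyclically chained sequence `D_1, …, D_{2n}` of allowed
direction triplets with exactly `n` middle letters `l`, exactly `n` middle
letters `r`, and exactly one occurrence of `dlu`, one has
(i) `N(urd) = N(dru) + 1`; (ii) `N(dld) + N(ulu) = n - 1`;
(iii) `N(drd) + N(dru) + N(uru) + N(urd) = n`; (iv) `2·N(urd) ≤ n + 1`. -/
theorem contour_triplet_counts (n : ℕ) (hn : 1 ≤ n) (D : ℕ → Bool × Bool × Bool)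
    (hS : ∀ k < 2 * n,
      D k ∈ ({dld, drd, dru, ulu, uru, urd, dlu} : Set (Bool × Bool × Bool)))
    (hchain : ∀ k, k + 1 < 2 * n → (D k).2.2 = (D (k + 1)).1)
    (hcyc : (D (2 * n - 1)).2.2 = (D 0).1)
    (hleft : ((Finset.range (2 * n)).filter fun k => (D k).2.1 = false).card = n)
    (hright : ((Finset.range (2 * n)).filter fun k => (D k).2.1 = true).card = n)
    (hdlu : Ncount n D dlu = 1) :
    Ncount n D urd = Ncount n D dru + 1 ∧
    Ncount n D dld + Ncount n D ulu = n - 1 ∧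
    Ncount n D drd + Ncount n D dru + Ncount n D uru + Ncount n D urd = n ∧
    2 * Ncount n D urd ≤ n + 1 := by
  have h2n : 0 < 2 * n := by omega
  have hmem : ∀ k < 2 * n, D k = dld ∨ D k = drd ∨ D k = dru ∨ D k = ulu ∨
      D k = uru ∨ D k = urd ∨ D k = dlu := by
    intro k hk
    have := hS k hk
    simpa [Set.mem_insert_iff] using this
  -- cyclic shift bijection
  have shift : ((Finset.range (2 * n)).filter fun k => (D k).2.2 = true).card
      = ((Finset.range (2 * n)).filter fun k => (D k).1 = true).card := by
    apply Finset.card_bij (fun k _ => (k + 1) % (2 * n))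
    · intro k hk
      simp only [Finset.mem_filter, Finset.mem_range] at hk ⊢
      refine ⟨Nat.mod_lt _ h2n, ?_⟩
      rcases Nat.lt_or_ge (k + 1) (2 * n) with h | h
      · rw [Nat.mod_eq_of_lt h, ← hchain k h]; exact hk.2
      · have hk1 : k = 2 * n - 1 := by omega
        subst hk1
        have h0 : (2 * n - 1 + 1) % (2 * n) = 0 := by
          have : 2 * n - 1 + 1 = 2 * n := by omega
          rw [this, Nat.mod_self]
        rw [h0, ← hcyc]; exact hk.2
    · intro a ha b hb hab
      simp only [Finset.mem_filter, Finset.mem_range] at ha hb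
      rcases Nat.lt_or_ge (a + 1) (2 * n) with h1 | h1 <;>
        rcases Nat.lt_or_ge (b + 1) (2 * n) with h2 | h2
      · rw [Nat.mod_eq_of_lt h1, Nat.mod_eq_of_lt h2] at hab; omega
      · have hb1 : b + 1 = 2 * n := by omega
        rw [Nat.mod_eq_of_lt h1, hb1, Nat.mod_self] at hab; omega
      · have ha1 : a + 1 = 2 * n := by omega
        rw [Nat.mod_eq_of_lt h2, ha1, Nat.mod_self] at hab; omega
      · omega
    · intro j hj
      simp only [Finset.mem_filter, Finset.mem_range] at hj
      rcases Nat.eq_zero_or_pos j with rfl | hjpos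
      · refine ⟨2 * n - 1, ?_, ?_⟩
        · simp only [Finset.mem_filter, Finset.mem_range]
          exact ⟨by omega, by rw [hcyc]; exact hj.2⟩
        · have : 2 * n - 1 + 1 = 2 * n := by omega
          rw [this, Nat.mod_self]
      · refine ⟨j - 1, ?_, ?_⟩
        · simp only [Finset.mem_filter, Finset.mem_range]
          have hj1 : j - 1 + 1 = j := by omega
          refine ⟨by omega, ?_⟩
          rw [hchain (j - 1) (by omega), hj1]; exact hj.2
        · have hj1 : j - 1 + 1 = j := by omega
          rw [hj1, Nat.mod_eq_of_lt hj.1]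
  -- decomposition lemmas
  have e1 : ((Finset.range (2 * n)).filter fun k => (D k).1 = true).card
      = Ncount n D ulu + Ncount n D uru + Ncount n D urd := by
    simp only [Ncount, Finset.card_filter]
    rw [← Finset.sum_add_distrib, ← Finset.sum_add_distrib]
    apply Finset.sum_congr rfl
    intro k hk
    rcases hmem k (Finset.mem_range.mp hk) with h | h | h | h | h | h | h <;>
      rw [h] <;> decide
  have e2 : ((Finset.range (2 * n)).filter fun k => (D k).2.2 = true).card
      = Ncount n D dru + Ncount n D ulu + Ncount n D uru + Ncount n D dlu := by
    simp only [Ncount, Finset.card_filter]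
    rw [← Finset.sum_add_distrib, ← Finset.sum_add_distrib, ← Finset.sum_add_distrib]
    apply Finset.sum_congr rfl
    intro k hk
    rcases hmem k (Finset.mem_range.mp hk) with h | h | h | h | h | h | h <;>
      rw [h] <;> decide
  have e3 : ((Finset.range (2 * n)).filter fun k => (D k).2.1 = false).card
      = Ncount n D dld + Ncount n D ulu + Ncount n D dlu := by
    simp only [Ncount, Finset.card_filter]
    rw [← Finset.sum_add_distrib, ← Finset.sum_add_distrib]
    apply Finset.sum_congr rfl
    intro k hk
    rcases hmem k (Finset.mem_range.mp hk) with h | h | h | h | h | h | h <;>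
      rw [h] <;> decide
  have e4 : ((Finset.range (2 * n)).filter fun k => (D k).2.1 = true).card
      = Ncount n D drd + Ncount n D dru + Ncount n D uru + Ncount n D urd := by
    simp only [Ncount, Finset.card_filter]
    rw [← Finset.sum_add_distrib, ← Finset.sum_add_distrib, ← Finset.sum_add_distrib]
    apply Finset.sum_congr rfl
    intro k hk
    rcases hmem k (Finset.mem_range.mp hk) with h | h | h | h | h | h | h <;>
      rw [h] <;> decide
  rw [e1, e2] at shift
  rw [e3] at hleft
  rw [e4] at hright
  omega
end
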